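/- For all integers n ≥ 1 and all real x, W_n^{(1)}(x) = (−2)^{n(n−1)/2} · (sin x)^{n(n+1)/2} · G(n+1) · 2n · cos x. -/

import Mathlib

open Real Finset

/-- Wronskian of `m` functions: determinant of the matrix whose `(i,j)` entry is
the `i`-th derivative of `u j` (rows indexed from the 0-th derivative). -/
noncomputable def wronskian (m : ℕ) (u : Fin m → ℝ → ℝ) (x : ℝ) : ℝ :=
  Matrix.det (Matrix.of fun i j : Fin m => iteratedDeriv (i : ℕ) (u j) x)

/-- `W n k x = Wr{sin x, sin 2x, …, sin (n-1)x, sin (n+k)x}`; for `n = 1` this is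
`sin ((k+1) x)`. -/
noncomputable def W (n k : ℕ) (x : ℝ) : ℝ :=
  wronskian n (fun j y =>
    if (j : ℕ) = n - 1 then Real.sin (((n + k : ℕ) : ℝ) * y)
    else Real.sin ((((j : ℕ) + 1 : ℕ) : ℝ) * y)) x

/-! ### Auxiliary lemmas -/

open scoped ContDiff

section Analysis

lemma contDiff_iteratedDeriv {f : ℝ → ℝ} (h : ContDiff ℝ ∞ f) (k : ℕ) :
    ContDiff ℝ ∞ (iteratedDeriv k f) := by
  rw [iteratedDeriv_eq_iterate]; exact h.iterate_deriv k

lemma diff_iteratedDeriv {f : ℝ → ℝ} (h : ContDiff ℝ ∞ f) (k : ℕ) :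
    Differentiable ℝ (iteratedDeriv k f) :=
  (contDiff_iteratedDeriv h k).differentiable (by simp)

lemma poly_contDiff (p : Polynomial ℝ) : ContDiff ℝ ∞ (fun t => p.eval t) := by
  induction p using Polynomial.induction_on' with
  | add p q hp hq => simpa [Polynomial.eval_add] using hp.add hq
  | monomial k a =>
      simpa [Polynomial.eval_monomial] using (contDiff_const (c := a)).mul (contDiff_id.pow k)

lemma iteratedDeriv_polyeval (l : ℕ) (p : Polynomial ℝ) :
    iteratedDeriv l (fun t => p.eval t) = fun t => (Polynomial.derivative^[l] p).eval t := by
  induction l with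
  | zero => simp
  | succ l ih =>
      rw [iteratedDeriv_succ, ih]; funext t
      simp [Function.iterate_succ_apply', Polynomial.deriv]

lemma my_leibniz {f g : ℝ → ℝ} (hf : ContDiff ℝ ∞ f) (hg : ContDiff ℝ ∞ g) (m : ℕ) :
    iteratedDeriv m (fun y => f y * g y) = fun x =>
      ∑ k ∈ range (m + 1), (m.choose k : ℝ) * (iteratedDeriv (m - k) f x * iteratedDeriv k g x) := by
  induction m with
  | zero => simp
  | succ m ih =>
    rw [iteratedDeriv_succ, ih]
    funext x
    rw [deriv_fun_sum (A := fun k x => (m.choose k : ℝ) * (iteratedDeriv (m - k) f x * iteratedDeriv k g x)) (fun k _ => (((diff_iteratedDeriv hf (m-k)).differentiableAt.mul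
          (diff_iteratedDeriv hg k).differentiableAt)).const_mul _)]
    have hterm : ∀ k ∈ range (m+1), deriv (fun x => (m.choose k : ℝ) *
        (iteratedDeriv (m - k) f x * iteratedDeriv k g x)) x
        = (m.choose k : ℝ) * (iteratedDeriv (m + 1 - k) f x * iteratedDeriv k g x)
          + (m.choose k : ℝ) * (iteratedDeriv (m - k) f x * iteratedDeriv (k+1) g x) := by
      intro k hk
      rw [Finset.mem_range] at hk
      rw [deriv_const_mul (d := fun x => iteratedDeriv (m - k) f x * iteratedDeriv k g x) _ ((diff_iteratedDeriv hf (m-k)).differentiableAt.mul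
          (diff_iteratedDeriv hg k).differentiableAt),
        deriv_fun_mul (diff_iteratedDeriv hf (m-k)).differentiableAt
          (diff_iteratedDeriv hg k).differentiableAt,
        ← iteratedDeriv_succ, ← iteratedDeriv_succ]
      have h1 : m - k + 1 = m + 1 - k := by omega
      rw [h1]; ring
    rw [Finset.sum_congr rfl hterm, Finset.sum_add_distrib]
    rw [Finset.sum_range_succ' (fun k => ((m+1).choose k : ℝ) *
      (iteratedDeriv (m + 1 - k) f x * iteratedDeriv k g x)) (m+1)]
    simp only [Nat.succ_sub_succ, Nat.choose_succ_succ, Nat.cast_add, add_mul,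
      Nat.choose_zero_right, Nat.cast_one, one_mul, Nat.sub_zero]
    rw [Finset.sum_add_distrib]
    have e1 : ∑ k ∈ range (m+1), (m.choose k : ℝ) * (iteratedDeriv (m + 1 - k) f x * iteratedDeriv k g x)
        = ∑ k ∈ range (m+1), (m.choose (k+1) : ℝ) * (iteratedDeriv (m - k) f x * iteratedDeriv (k+1) g x)
          + iteratedDeriv (m+1) f x * iteratedDeriv 0 g x := by
      rw [Finset.sum_range_succ' (fun k => (m.choose k : ℝ) *
        (iteratedDeriv (m + 1 - k) f x * iteratedDeriv k g x)) m,
        Finset.sum_range_succ (fun k => (m.choose (k+1) : ℝ) *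
        (iteratedDeriv (m - k) f x * iteratedDeriv (k+1) g x)) m]
      simp [Nat.succ_sub_succ, Nat.choose_succ_self]
    rw [e1]
    ring

lemma wronskian_mul (n : ℕ) (f : ℝ → ℝ) (g : Fin n → ℝ → ℝ) (hf : ContDiff ℝ ∞ f)
    (hg : ∀ j, ContDiff ℝ ∞ (g j)) (x : ℝ) :
    wronskian n (fun j y => f y * g j y) x = f x ^ n * wronskian n g x := by
  have key : (Matrix.of fun i j : Fin n => iteratedDeriv (i : ℕ) (fun y => f y * g j y) x) =
      (Matrix.of fun i k : Fin n => if (k : ℕ) ≤ (i : ℕ) then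
          (((i : ℕ)).choose k : ℝ) * iteratedDeriv ((i : ℕ) - k) f x else 0) *
        (Matrix.of fun k j : Fin n => iteratedDeriv (k : ℕ) (g j) x) := by
    ext i j
    rw [Matrix.mul_apply]
    simp only [Matrix.of_apply]
    rw [congrFun (my_leibniz hf (hg j) (i : ℕ)) x]
    symm
    have hin : (i : ℕ) + 1 ≤ n := i.2
    calc ∑ k : Fin n, (if (k : ℕ) ≤ (i : ℕ) then (((i : ℕ)).choose k : ℝ) *
            iteratedDeriv ((i : ℕ) - k) f x else 0) * iteratedDeriv (k : ℕ) (g j) x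
        = ∑ k : Fin n, (fun k : ℕ => if k ≤ (i : ℕ) then (((i : ℕ)).choose k : ℝ) *
            (iteratedDeriv ((i : ℕ) - k) f x * iteratedDeriv k (g j) x) else 0) (k : ℕ) := by
          refine Finset.sum_congr rfl fun k _ => ?_
          by_cases h : (k : ℕ) ≤ (i : ℕ)
          · rw [if_pos h]; simp only [if_pos h]; ring
          · rw [if_neg h]; simp only [if_neg h, zero_mul]
      _ = ∑ k ∈ range n, (if k ≤ (i : ℕ) then (((i : ℕ)).choose k : ℝ) *
            (iteratedDeriv ((i : ℕ) - k) f x * iteratedDeriv k (g j) x) else 0) :=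
          Fin.sum_univ_eq_sum_range (fun k : ℕ => if k ≤ (i : ℕ) then (((i : ℕ)).choose k : ℝ) *
            (iteratedDeriv ((i : ℕ) - k) f x * iteratedDeriv k (g j) x) else 0) n
      _ = ∑ k ∈ range ((i : ℕ) + 1), (if k ≤ (i : ℕ) then (((i : ℕ)).choose k : ℝ) *
            (iteratedDeriv ((i : ℕ) - k) f x * iteratedDeriv k (g j) x) else 0) := by
          refine (Finset.sum_subset (Finset.range_subset_range.2 hin) ?_).symm
          intro k hk1 hk
          rw [Finset.mem_range, not_lt] at hk
          rw [if_neg (by omega)]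
      _ = ∑ k ∈ range ((i : ℕ) + 1), (((i : ℕ)).choose k : ℝ) *
            (iteratedDeriv ((i : ℕ) - k) f x * iteratedDeriv k (g j) x) := by
          refine Finset.sum_congr rfl fun k hk => ?_
          rw [Finset.mem_range] at hk
          rw [if_pos (by omega)]
  rw [wronskian, key, Matrix.det_mul, wronskian]
  have htri : Matrix.BlockTriangular (Matrix.of fun i k : Fin n => if (k : ℕ) ≤ (i : ℕ) then
      (((i : ℕ)).choose k : ℝ) * iteratedDeriv ((i : ℕ) - k) f x else 0) OrderDual.toDual := by
    intro i k h
    simp only [Matrix.of_apply]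
    rw [if_neg]
    exact fun hc => absurd h (by simp [OrderDual.toDual_lt_toDual]; omega)
  rw [Matrix.det_of_lowerTriangular _ htri]
  congr 1
  calc ∏ i : Fin n, (Matrix.of fun i k : Fin n => if (k : ℕ) ≤ (i : ℕ) then
      (((i : ℕ)).choose k : ℝ) * iteratedDeriv ((i : ℕ) - k) f x else 0) i i
      = ∏ i : Fin n, f x := by
        apply Finset.prod_congr rfl; intro i _
        simp [iteratedDeriv_zero]
    _ = f x ^ n := by simp

/-- Faà di Bruno coefficients for composition with `cos`. -/
noncomputable def FB : ℕ → ℕ → ℝ → ℝ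
  | 0, 0 => fun _ => 1
  | 0, _ + 1 => fun _ => 0
  | i + 1, 0 => deriv (FB i 0)
  | i + 1, k + 1 => fun x => deriv (FB i (k + 1)) x + (-Real.sin x) * FB i k x

lemma FB_smooth (i k : ℕ) : ContDiff ℝ ∞ (FB i k) := by
  induction i generalizing k with
  | zero => cases k <;> · rw [FB]; exact contDiff_const
  | succ i ih =>
    have hd : ∀ k, ContDiff ℝ ∞ (deriv (FB i k)) := fun k => (contDiff_infty_iff_deriv.mp (ih k)).2
    cases k with
    | zero => rw [FB]; exact hd 0
    | succ k => rw [FB]; exact (hd (k+1)).add ((Real.contDiff_sin.neg).mul (ih k))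

lemma FB_zero_of_lt {i k : ℕ} (h : i < k) : FB i k = fun _ => 0 := by
  induction i generalizing k with
  | zero => match k, h with | k + 1, _ => rw [FB]
  | succ i ih =>
    match k, h with
    | k + 1, h =>
      rw [FB]
      funext y
      rw [ih (by omega), ih (by omega)]
      simp

lemma FB_diag (i : ℕ) (x : ℝ) : FB i i x = (-Real.sin x) ^ i := by
  induction i generalizing x with
  | zero => simp [FB]
  | succ i ih =>
    rw [FB, FB_zero_of_lt (by omega)]
    simp only [deriv_const']
    rw [ih]
    ring

lemma FB_chain (g : ℝ → ℝ) (hg : ContDiff ℝ ∞ g) (i : ℕ) (x : ℝ) :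
    iteratedDeriv i (fun y => g (Real.cos y)) x
      = ∑ k ∈ range (i + 1), FB i k x * iteratedDeriv k g (Real.cos x) := by
  induction i generalizing x with
  | zero => simp [FB]
  | succ i ih =>
    rw [iteratedDeriv_succ]
    have hfun : iteratedDeriv i (fun y => g (Real.cos y))
        = fun x => ∑ k ∈ range (i + 1), FB i k x * iteratedDeriv k g (Real.cos x) :=
      funext fun x => ih x
    rw [hfun]
    have hdterm : ∀ k, DifferentiableAt ℝ (fun x => FB i k x * iteratedDeriv k g (Real.cos x)) x := by
      intro k
      exact (((FB_smooth i k).differentiable (by simp)) x).mul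
        (((diff_iteratedDeriv hg k).comp Real.differentiable_cos) x)
    rw [deriv_fun_sum (fun k _ => hdterm k)]
    have hterm : ∀ k ∈ range (i+1), deriv (fun x => FB i k x * iteratedDeriv k g (Real.cos x)) x
        = deriv (FB i k) x * iteratedDeriv k g (Real.cos x)
          + (-Real.sin x) * FB i k x * iteratedDeriv (k+1) g (Real.cos x) := by
      intro k _
      have d1 : DifferentiableAt ℝ (FB i k) x := ((FB_smooth i k).differentiable (by simp)) x
      have d2 : DifferentiableAt ℝ (fun x => iteratedDeriv k g (Real.cos x)) x := by
        exact DifferentiableAt.comp x ((diff_iteratedDeriv hg k) (Real.cos x))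
          (Real.differentiable_cos x)
      rw [deriv_fun_mul d1 d2]
      have hc : deriv (fun x => iteratedDeriv k g (Real.cos x)) x
          = -Real.sin x * iteratedDeriv (k+1) g (Real.cos x) := by
        have h1 : HasDerivAt (fun x => iteratedDeriv k g (Real.cos x))
            (deriv (iteratedDeriv k g) (Real.cos x) * (-Real.sin x)) x :=
          (((diff_iteratedDeriv hg k) (Real.cos x)).hasDerivAt).comp x (Real.hasDerivAt_cos x)
        rw [h1.deriv, ← iteratedDeriv_succ]
        ring
      rw [hc]
      ring
    rw [Finset.sum_congr rfl hterm, Finset.sum_add_distrib]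
    have he : ∀ k ∈ range (i + 2), FB (i+1) k x * iteratedDeriv k g (Real.cos x)
        = deriv (FB i k) x * iteratedDeriv k g (Real.cos x)
          + (if 1 ≤ k then (-Real.sin x) * FB i (k-1) x * iteratedDeriv k g (Real.cos x) else 0) := by
      intro k _
      match k with
      | 0 => rw [FB]; simp
      | k + 1 => rw [FB]; simp only [Nat.add_sub_cancel, if_pos (by omega : 1 ≤ k + 1)]; ring
    rw [Finset.sum_congr rfl he, Finset.sum_add_distrib]
    congr 1
    · rw [Finset.sum_range_succ (fun k => deriv (FB i k) x * iteratedDeriv k g (Real.cos x)) (i+1)]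
      have hz : deriv (FB i (i+1)) x = 0 := by rw [FB_zero_of_lt (by omega)]; simp
      rw [hz, zero_mul, add_zero]
    · rw [Finset.sum_range_succ' (fun k => if 1 ≤ k then (-Real.sin x) * FB i (k-1) x
          * iteratedDeriv k g (Real.cos x) else 0) (i+1)]
      rw [if_neg (by omega : ¬ (1:ℕ) ≤ 0), add_zero]
      apply Finset.sum_congr rfl
      intro k _
      rw [if_pos (by omega : 1 ≤ k + 1)]
      simp only [Nat.add_sub_cancel]

end Analysis

section Chebyshev

open Polynomial Polynomial.Chebyshev

lemma U_facts : ∀ m : ℕ, (∀ k : ℕ, ((m : ℕ) < k ∨ (m + k) % 2 = 1) → (U ℝ m).coeff k = 0) ∧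
    (U ℝ m).coeff m = 2 ^ m
  | 0 => by
    constructor
    · intro k hk
      rw [show ((0:ℕ):ℤ) = 0 by norm_num, U_zero]
      have : k ≠ 0 := by omega
      simp [coeff_one, this, Ne.symm this]
    · rw [show ((0:ℕ):ℤ) = 0 by norm_num, U_zero]; simp
  | 1 => by
    constructor
    · intro k hk
      rw [show ((1:ℕ):ℤ) = 1 by norm_num, U_one]
      have : k ≠ 1 := by omega
      simp [coeff_X, this, Ne.symm this]
    · rw [show ((1:ℕ):ℤ) = 1 by norm_num, U_one]; simp
  | (m+2) => by
    have h0 := U_facts m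
    have h1 := U_facts (m+1)
    have hrec : (U ℝ (m+2 : ℕ)) = Polynomial.C 2 * (X * U ℝ (m+1 : ℕ)) - U ℝ (m : ℕ) := by
      have h := U_add_two ℝ (m : ℤ)
      push_cast
      push_cast at h
      rw [h]
      have h2 : (Polynomial.C (2:ℝ)) = (2 : ℝ[X]) := by
        exact map_ofNat Polynomial.C 2
      rw [h2]
      ring
    constructor
    · intro k hk
      rw [hrec, coeff_sub, coeff_C_mul]
      match k with
      | 0 =>
        rw [Polynomial.coeff_X_mul_zero]
        have : (U ℝ (m:ℕ)).coeff 0 = 0 := h0.1 0 (by omega)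
        rw [this]; ring
      | k+1 =>
        rw [Polynomial.coeff_X_mul]
        rw [h1.1 k (by omega), h0.1 (k+1) (by omega)]
        ring
    · rw [hrec, coeff_sub, coeff_C_mul, Polynomial.coeff_X_mul, h1.2, h0.1 (m+2) (by omega)]
      push_cast
      ring

/-- the degree sequence 0, 1, …, n-2, n -/
def dd (n : ℕ) (j : Fin n) : ℕ := if (j : ℕ) = n - 1 then n else (j : ℕ)

lemma dd_le (n : ℕ) (j : Fin n) : dd n j ≤ n := by
  unfold dd; split <;> omega

lemma dd_lt_dd {n : ℕ} {j k : Fin n} (h : j < k) : dd n j < dd n k := by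
  have hj := j.2; have hk := k.2
  unfold dd
  rw [Fin.lt_def] at h
  split <;> split <;> omega

lemma dd_inj {n : ℕ} : Function.Injective (dd n) := by
  intro a b h
  rcases lt_trichotomy a b with hc | hc | hc
  · exact absurd h (dd_lt_dd hc).ne
  · exact hc
  · exact absurd h.symm (dd_lt_dd hc).ne

lemma coeff_U_dd_eq_zero (m : ℕ) (j : Fin (m+1)) : (U ℝ (dd (m+1) j)).coeff m = 0 := by
  by_cases hj : (j : ℕ) = m
  · have : dd (m+1) j = m + 1 := by unfold dd; simp [hj]
    rw [this]
    exact (U_facts (m+1)).1 m (Or.inr (by omega))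
  · have hjm : (j : ℕ) < m := by have := j.2; omega
    have : dd (m+1) j = (j : ℕ) := by
      unfold dd; simp only [Nat.add_sub_cancel]; rw [if_neg hj]
    rw [this]
    exact (U_facts j).1 m (Or.inl hjm)

lemma keyU (m : ℕ) (j : Fin (m+1)) :
    ∑ k : Fin (m+1), Polynomial.C ((U ℝ (dd (m+1) j)).coeff (dd (m+1) k)) * X ^ (dd (m+1) k)
      = U ℝ (dd (m+1) j) := by
  have hdeg : (U ℝ (dd (m+1) j)).natDegree ≤ m + 1 := by
    rw [Polynomial.natDegree_le_iff_coeff_eq_zero]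
    intro k hk
    exact (U_facts (dd (m+1) j)).1 k (Or.inl (lt_of_le_of_lt (dd_le _ j) hk))
  have hsum : U ℝ (dd (m+1) j) = ∑ i ∈ range (m + 2),
      Polynomial.C ((U ℝ (dd (m+1) j)).coeff i) * X ^ i := by
    conv_lhs => rw [(U ℝ (dd (m+1) j)).as_sum_range' (m+2) (by omega)]
    simp [Polynomial.C_mul_X_pow_eq_monomial]
  calc ∑ k : Fin (m+1), Polynomial.C ((U ℝ (dd (m+1) j)).coeff (dd (m+1) k)) * X ^ (dd (m+1) k)
      = ∑ i ∈ (univ : Finset (Fin (m+1))).image (dd (m+1)),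
          Polynomial.C ((U ℝ (dd (m+1) j)).coeff i) * X ^ i := by
        rw [Finset.sum_image (fun a _ b _ h => dd_inj h)]
    _ = ∑ i ∈ range (m + 2), Polynomial.C ((U ℝ (dd (m+1) j)).coeff i) * X ^ i := by
        apply Finset.sum_subset
        · intro i hi
          simp only [Finset.mem_image] at hi
          obtain ⟨a, _, rfl⟩ := hi
          rw [Finset.mem_range]
          have := dd_le _ a; omega
        · intro i hir hini
          have him : i = m := by
            rw [Finset.mem_range] at hir
            by_contra hne
            apply hini
            simp only [Finset.mem_image]
            by_cases hc : i = m + 1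
            · exact ⟨⟨m, by omega⟩, Finset.mem_univ _, by subst hc; unfold dd; simp⟩
            · refine ⟨⟨i, by omega⟩, Finset.mem_univ _, ?_⟩
              unfold dd; simp only [Nat.add_sub_cancel]; rw [if_neg hne]
          subst him
          rw [coeff_U_dd_eq_zero _ j]
          simp
    _ = U ℝ (dd (m+1) j) := hsum.symm

lemma polydet (m : ℕ) :
    Matrix.det (Matrix.of fun l j : Fin (m+1) => derivative^[(l : ℕ)] (U ℝ (dd (m+1) j)))
      = Polynomial.C ((∏ j : Fin (m+1), (2 : ℝ) ^ (dd (m+1) j)) *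
          ((∏ k ∈ Finset.range m, (k.factorial : ℝ)) * ((m+1).factorial : ℝ))) * X := by
  have hfact : (Matrix.of fun l j : Fin (m+1) => derivative^[(l : ℕ)] (U ℝ (dd (m+1) j)))
      = (Matrix.of fun l k : Fin (m+1) => derivative^[(l : ℕ)] (X ^ (dd (m+1) k) : ℝ[X])) *
        (Matrix.of fun k j : Fin (m+1) => Polynomial.C ((U ℝ (dd (m+1) j)).coeff (dd (m+1) k))) := by
    refine Matrix.ext fun l j => ?_
    rw [Matrix.mul_apply]
    simp only [Matrix.of_apply]
    symm
    calc ∑ k : Fin (m+1), derivative^[(l : ℕ)] (X ^ (dd (m+1) k) : ℝ[X]) *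
            Polynomial.C ((U ℝ (dd (m+1) j)).coeff (dd (m+1) k))
        = ∑ k : Fin (m+1), derivative^[(l : ℕ)]
            (Polynomial.C ((U ℝ (dd (m+1) j)).coeff (dd (m+1) k)) * X ^ (dd (m+1) k)) := by
          refine Finset.sum_congr rfl fun k _ => ?_
          rw [Polynomial.iterate_derivative_C_mul]
          ring
      _ = derivative^[(l : ℕ)] (∑ k : Fin (m+1),
            Polynomial.C ((U ℝ (dd (m+1) j)).coeff (dd (m+1) k)) * X ^ (dd (m+1) k)) := by
          rw [Polynomial.iterate_derivative_sum]
      _ = derivative^[(l : ℕ)] (U ℝ (dd (m+1) j)) := by rw [keyU]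
  rw [hfact, Matrix.det_mul]
  have hQtri : Matrix.BlockTriangular (Matrix.of fun l k : Fin (m+1) =>
      derivative^[(l : ℕ)] (X ^ (dd (m+1) k) : ℝ[X])) id := by
    intro l k h
    simp only [Matrix.of_apply, id] at *
    apply Polynomial.iterate_derivative_eq_zero
    rw [Polynomial.natDegree_X_pow]
    have hk : (k : ℕ) < (l : ℕ) := h
    have hkm : (k : ℕ) ≠ m := by have := l.2; omega
    unfold dd
    simp only [Nat.add_sub_cancel]
    rw [if_neg hkm]
    exact hk
  have hCtri : Matrix.BlockTriangular (Matrix.of fun k j : Fin (m+1) =>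
      Polynomial.C ((U ℝ (dd (m+1) j)).coeff (dd (m+1) k))) id := by
    intro k j h
    simp only [Matrix.of_apply, id] at *
    rw [(U_facts (dd (m+1) j)).1 _ (Or.inl (dd_lt_dd h)), map_zero]
  rw [Matrix.det_of_upperTriangular hQtri, Matrix.det_of_upperTriangular hCtri]
  have hC : (∏ k : Fin (m+1), (Matrix.of fun k j : Fin (m+1) =>
      Polynomial.C ((U ℝ (dd (m+1) j)).coeff (dd (m+1) k))) k k)
      = Polynomial.C (∏ j : Fin (m+1), (2 : ℝ) ^ (dd (m+1) j)) := by
    rw [map_prod]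
    refine Finset.prod_congr rfl fun k _ => ?_
    simp only [Matrix.of_apply]
    rw [(U_facts (dd (m+1) k)).2]
  have hQ : (∏ l : Fin (m+1), (Matrix.of fun l k : Fin (m+1) =>
      derivative^[(l : ℕ)] (X ^ (dd (m+1) k) : ℝ[X])) l l)
      = Polynomial.C ((∏ k ∈ Finset.range m, (k.factorial : ℝ)) * ((m+1).factorial : ℝ)) * X := by
    rw [Fin.prod_univ_castSucc]
    have hlast : dd (m+1) (Fin.last m) = m + 1 := by unfold dd; simp
    have hmid : ∀ i : Fin m, (Matrix.of fun l k : Fin (m+1) =>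
        derivative^[(l : ℕ)] (X ^ (dd (m+1) k) : ℝ[X])) i.castSucc i.castSucc
        = Polynomial.C (((i : ℕ).factorial : ℝ)) := by
      intro i
      simp only [Matrix.of_apply, Fin.coe_castSucc]
      have hdi : dd (m+1) i.castSucc = (i : ℕ) := by
        unfold dd; simp only [Nat.add_sub_cancel, Fin.coe_castSucc]
        rw [if_neg (by have := i.2; omega)]
      rw [hdi, Polynomial.iterate_derivative_X_pow_eq_C_mul, Nat.sub_self, pow_zero, mul_one,
        Nat.descFactorial_self]
    rw [Finset.prod_congr rfl (fun i _ => hmid i)]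
    simp only [Matrix.of_apply, hlast, Fin.val_last]
    rw [Polynomial.iterate_derivative_X_pow_eq_C_mul]
    have hdesc : (m+1).descFactorial m = (m+1).factorial := by
      have h1 := Nat.descFactorial_succ (m+1) m
      have h2 := Nat.descFactorial_self (m+1)
      rw [show m+1-m = 1 by omega, one_mul] at h1
      omega
    rw [hdesc, show m + 1 - m = 1 by omega, pow_one]
    have hprod : ∏ i : Fin m, Polynomial.C (((i : ℕ).factorial : ℝ))
        = Polynomial.C (∏ k ∈ Finset.range m, (k.factorial : ℝ)) := by
      rw [map_prod]
      exact Fin.prod_univ_eq_prod_range (fun k => Polynomial.C ((k.factorial : ℝ))) m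
    rw [hprod]
    rw [show Polynomial.C ((∏ k ∈ Finset.range m, (k.factorial : ℝ)) * ((m+1).factorial : ℝ))
      = Polynomial.C (∏ k ∈ Finset.range m, (k.factorial : ℝ)) * Polynomial.C (((m+1).factorial : ℝ))
      from by rw [map_mul]]
    ring
  rw [hC, hQ, mul_right_comm, ← Polynomial.C_mul,
    mul_comm ((∏ k ∈ Finset.range m, (k.factorial : ℝ)) * ((m+1).factorial : ℝ))]

end Chebyshev

section Comp

open Polynomial in
lemma wronskian_comp_cos (n : ℕ) (p : Fin n → ℝ[X]) (x : ℝ) :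
    wronskian n (fun j y => (p j).eval (Real.cos y)) x
      = (-Real.sin x) ^ (n*(n-1)/2) * Polynomial.eval (Real.cos x)
          (Matrix.det (Matrix.of fun l j : Fin n => derivative^[(l : ℕ)] (p j))) := by
  have key : (Matrix.of fun i j : Fin n => iteratedDeriv (i : ℕ) (fun y => (p j).eval (Real.cos y)) x)
      = (Matrix.of fun i k : Fin n => if (k : ℕ) ≤ (i : ℕ) then FB (i : ℕ) (k : ℕ) x else 0) *
        (Matrix.of fun k j : Fin n =>
          Polynomial.eval (Real.cos x) (derivative^[(k : ℕ)] (p j))) := by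
    refine Matrix.ext fun i j => ?_
    rw [Matrix.mul_apply]
    simp only [Matrix.of_apply]
    rw [FB_chain (fun t => (p j).eval t) (poly_contDiff (p j)) (i : ℕ) x]
    symm
    have hin : (i : ℕ) + 1 ≤ n := i.2
    calc ∑ k : Fin n, (if (k : ℕ) ≤ (i : ℕ) then FB (i : ℕ) (k : ℕ) x else 0) *
            Polynomial.eval (Real.cos x) (derivative^[(k : ℕ)] (p j))
        = ∑ k : Fin n, (fun k : ℕ => if k ≤ (i : ℕ) then FB (i : ℕ) k x *
            iteratedDeriv k (fun t => (p j).eval t) (Real.cos x) else 0) (k : ℕ) := by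
          refine Finset.sum_congr rfl fun k _ => ?_
          by_cases h : (k : ℕ) ≤ (i : ℕ)
          · rw [if_pos h]; simp only [if_pos h]
            rw [iteratedDeriv_polyeval]
          · rw [if_neg h]; simp only [if_neg h, zero_mul]
      _ = ∑ k ∈ range n, (if k ≤ (i : ℕ) then FB (i : ℕ) k x *
            iteratedDeriv k (fun t => (p j).eval t) (Real.cos x) else 0) :=
          Fin.sum_univ_eq_sum_range (fun k : ℕ => if k ≤ (i : ℕ) then FB (i : ℕ) k x *
            iteratedDeriv k (fun t => (p j).eval t) (Real.cos x) else 0) n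
      _ = ∑ k ∈ range ((i : ℕ) + 1), (if k ≤ (i : ℕ) then FB (i : ℕ) k x *
            iteratedDeriv k (fun t => (p j).eval t) (Real.cos x) else 0) := by
          refine (Finset.sum_subset (Finset.range_subset_range.2 hin) ?_).symm
          intro k hk1 hk
          rw [Finset.mem_range, not_lt] at hk
          rw [if_neg (by omega)]
      _ = ∑ k ∈ range ((i : ℕ) + 1), FB (i : ℕ) k x *
            iteratedDeriv k (fun t => (p j).eval t) (Real.cos x) := by
          refine Finset.sum_congr rfl fun k hk => ?_
          rw [Finset.mem_range] at hk
          rw [if_pos (by omega)]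
  unfold _root_.wronskian
  rw [key, Matrix.det_mul]
  have htri : Matrix.BlockTriangular (Matrix.of fun i k : Fin n =>
      if (k : ℕ) ≤ (i : ℕ) then FB (i : ℕ) (k : ℕ) x else 0) OrderDual.toDual := by
    intro i k h
    simp only [Matrix.of_apply]
    rw [if_neg]
    exact fun hc => absurd h (by simp [OrderDual.toDual_lt_toDual]; omega)
  rw [Matrix.det_of_lowerTriangular _ htri]
  have hdiag : (∏ i : Fin n, (Matrix.of fun i k : Fin n =>
      if (k : ℕ) ≤ (i : ℕ) then FB (i : ℕ) (k : ℕ) x else 0) i i)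
      = (-Real.sin x) ^ (n*(n-1)/2) := by
    calc (∏ i : Fin n, (Matrix.of fun i k : Fin n =>
        if (k : ℕ) ≤ (i : ℕ) then FB (i : ℕ) (k : ℕ) x else 0) i i)
        = ∏ i : Fin n, (fun i : ℕ => (-Real.sin x) ^ i) (i : ℕ) := by
          refine Finset.prod_congr rfl fun i _ => ?_
          simp only [Matrix.of_apply, if_pos (le_refl _)]
          exact FB_diag (i : ℕ) x
      _ = ∏ i ∈ range n, (-Real.sin x) ^ i :=
          Fin.prod_univ_eq_prod_range (fun i : ℕ => (-Real.sin x) ^ i) n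
      _ = (-Real.sin x) ^ (∑ i ∈ range n, i) := by rw [Finset.prod_pow_eq_pow_sum]
      _ = (-Real.sin x) ^ (n*(n-1)/2) := by rw [Finset.sum_range_id]
  rw [hdiag]
  congr 1
  have hmap : (Matrix.of fun k j : Fin n =>
      Polynomial.eval (Real.cos x) (derivative^[(k : ℕ)] (p j)))
      = (Matrix.of fun l j : Fin n => derivative^[(l : ℕ)] (p j)).map
          (Polynomial.evalRingHom (Real.cos x)) := rfl
  rw [hmap, ← RingHom.mapMatrix_apply, ← RingHom.map_det]
  rfl

end Comp

theorem stmt3 (n : ℕ) (hn : 1 ≤ n) (x : ℝ) :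
    W n 1 x =
      (-2 : ℝ) ^ (n * (n - 1) / 2) * Real.sin x ^ (n * (n + 1) / 2) *
        (∏ j ∈ Finset.range n, (j.factorial : ℝ)) * (2 * (n : ℝ)) * Real.cos x := by
  obtain ⟨m, rfl⟩ : ∃ m, n = m + 1 := ⟨n - 1, by omega⟩
  -- Step 1: rewrite the entries using Chebyshev U
  have hW : W (m+1) 1 x = wronskian (m+1)
      (fun j y => Real.sin y *
        (Polynomial.Chebyshev.U ℝ (dd (m+1) j)).eval (Real.cos y)) x := by
    unfold W
    congr 1
    funext j y
    by_cases hj : (j : ℕ) = (m+1) - 1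
    · rw [if_pos hj]
      have hd : dd (m+1) j = m + 1 := by unfold dd; rw [if_pos hj]
      rw [hd]
      have := Polynomial.Chebyshev.U_real_cos y ((m+1 : ℕ) : ℤ)
      push_cast at this ⊢
      rw [mul_comm (Real.sin y)]
      rw [this]
    · rw [if_neg hj]
      have hd : dd (m+1) j = (j : ℕ) := by unfold dd; rw [if_neg hj]
      rw [hd]
      have := Polynomial.Chebyshev.U_real_cos y (((j : ℕ) : ℤ))
      push_cast at this ⊢
      rw [mul_comm (Real.sin y)]
      rw [this]
  rw [hW]
  rw [wronskian_mul (m+1) Real.sin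
    (fun j => fun y => (Polynomial.Chebyshev.U ℝ (dd (m+1) j)).eval (Real.cos y))
    Real.contDiff_sin
    (fun j => (poly_contDiff _).comp Real.contDiff_cos) x]
  rw [wronskian_comp_cos (m+1) (fun j => Polynomial.Chebyshev.U ℝ (dd (m+1) j)) x]
  rw [polydet m]
  -- arithmetic
  have hsum2 : (∑ i ∈ range (m+1), i) * 2 = (m+1) * m := Finset.sum_range_id_mul_two (m+1)
  have hs1 : (m+1) * ((m+1) - 1) / 2 = ∑ i ∈ range (m+1), i := by
    rw [Nat.add_sub_cancel, Finset.sum_range_id, Nat.add_sub_cancel]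
  have hprod2 : (∏ j : Fin (m+1), (2 : ℝ) ^ (dd (m+1) j))
      = 2 ^ ((∑ i ∈ range (m+1), i) + 1) := by
    calc (∏ j : Fin (m+1), (2 : ℝ) ^ (dd (m+1) j))
        = ∏ j : Fin (m+1), (fun k : ℕ => (2:ℝ) ^ (if k = m then m + 1 else k)) (j : ℕ) := by
          refine Finset.prod_congr rfl fun j _ => ?_
          unfold dd
          simp only [Nat.add_sub_cancel]
      _ = ∏ k ∈ range (m+1), (2:ℝ) ^ (if k = m then m + 1 else k) :=
          Fin.prod_univ_eq_prod_range (fun k : ℕ => (2:ℝ) ^ (if k = m then m + 1 else k)) (m+1)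
      _ = (∏ k ∈ range m, (2:ℝ) ^ (if k = m then m + 1 else k)) * 2 ^ (m+1) := by
          rw [Finset.prod_range_succ, if_pos rfl]
      _ = (∏ k ∈ range m, (2:ℝ) ^ k) * 2 ^ (m+1) := by
          congr 1
          refine Finset.prod_congr rfl fun k hk => ?_
          rw [Finset.mem_range] at hk
          rw [if_neg (by omega)]
      _ = 2 ^ ((∑ i ∈ range m, i) + (m+1)) := by
          rw [Finset.prod_pow_eq_pow_sum, ← pow_add]
      _ = 2 ^ ((∑ i ∈ range (m+1), i) + 1) := by
          congr 1
          rw [Finset.sum_range_succ]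
          omega
  have hsinexp : (m+1) * ((m+1) + 1) / 2 = (m + 1) + (∑ i ∈ range (m+1), i) := by
    have h3 : (∑ i ∈ range (m+2), i) * 2 = (m+2) * (m+1) := Finset.sum_range_id_mul_two (m+2)
    have h4 : ∑ i ∈ range (m+2), i = (∑ i ∈ range (m+1), i) + (m+1) := Finset.sum_range_succ _ _
    have h5 : (m+1) * ((m+1)+1) = (m+2) * (m+1) := by ring
    omega
  have hfacts : (∏ j ∈ Finset.range (m+1), (j.factorial : ℝ))
      = (∏ k ∈ Finset.range m, (k.factorial : ℝ)) * (m.factorial : ℝ) :=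
    Finset.prod_range_succ _ _
  have hfactsucc : ((m+1).factorial : ℝ) = (m+1) * (m.factorial : ℝ) := by
    rw [Nat.factorial_succ]; push_cast; ring
  rw [Polynomial.eval_mul, Polynomial.eval_C, Polynomial.eval_X, hprod2, hs1, hsinexp, hfacts,
    hfactsucc]
  rw [show (-Real.sin x) ^ (∑ i ∈ range (m+1), i)
      = (-1 : ℝ) ^ (∑ i ∈ range (m+1), i) * Real.sin x ^ (∑ i ∈ range (m+1), i) from by
    rw [← neg_one_mul, mul_pow]]
  rw [show ((-2 : ℝ)) ^ (∑ i ∈ range (m+1), i)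
      = (-1 : ℝ) ^ (∑ i ∈ range (m+1), i) * 2 ^ (∑ i ∈ range (m+1), i) from by
    rw [← neg_one_mul, mul_pow]]
  push_cast
  ring
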